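/- arXiv:1708.01070 — 3 statements merged into one kernel-verified Lean document; each statement's English description precedes it below -/
import Mathlib

section
/- Let 1 ≤ s ≤ m, k < n, D = ⌊(n−k+1)/(s+1)⌋, and let A_0,…,A_s ∈ F_{q^m}[X] with deg A_0 ≤ D+k−1, deg A_i ≤ D for i ≥ 1, satisfying A_0(α_i) + Σ_{j=1}^s A_j(α_i) y_i^{q^{j−1}} = 0 for all i = 1,…,n. If f ∈ F_{q^m}[X] has degree less than k and f(α_i) ≠ y_i for at most e values of i, where e ≤ (s/(s+1))·(n−k), then A_0(X) + A_1(X) f(X) + A_2(X) f^σ(X) + ⋯ + A_s(X) f^{σ^{s−1}}(X) is the zero polynomial. -/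
/-- If the interpolation conditions hold and `f` of degree `< k` disagrees with `y`
in at most `e ≤ (s/(s+1))(n-k)` positions, then
`A_0 + A_1 f + A_2 f^σ + ⋯ + A_s f^{σ^{s-1}}` is the zero polynomial. -/
theorem stmt_5 {Fq L : Type*} [Field Fq] [Fintype Fq] [Field L] [Fintype L]
    [DecidableEq L] [Algebra Fq L] (q m n k s D e : ℕ)
    (hq : Fintype.card Fq = q) (hL : Fintype.card L = q ^ m)
    (hk : 1 ≤ k) (hkn : k < n) (hnq : n ≤ q) (hs1 : 1 ≤ s) (hsm : s ≤ m)
    (hD : D = (n - k + 1) / (s + 1))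
    (φ : L →+* L) (hφ : ∀ x, φ x = x ^ q)
    (α : Fin n → Fq) (hα : Function.Injective α) (y : Fin n → L)
    (A : Fin (s + 1) → Polynomial L)
    (hA0 : (A 0).degree ≤ ((D + k - 1 : ℕ) : WithBot ℕ))
    (hAi : ∀ i : Fin s, (A i.succ).degree ≤ (D : WithBot ℕ))
    (hinterp : ∀ i : Fin n, (A 0).eval (algebraMap Fq L (α i))
        + ∑ j : Fin s, (A j.succ).eval (algebraMap Fq L (α i)) * (y i) ^ q ^ (j : ℕ) = 0)
    (f : Polynomial L) (hf : f.degree < (k : WithBot ℕ))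
    (hagree : (Finset.univ.filter fun i : Fin n =>
        f.eval (algebraMap Fq L (α i)) ≠ y i).card ≤ e)
    (he : (s + 1) * e ≤ s * (n - k)) :
    A 0 + ∑ j : Fin s, A j.succ * ((Polynomial.map φ)^[(j : ℕ)] f) = 0 := by
  classical
  set Φ : Polynomial L := A 0 + ∑ j : Fin s, A j.succ * ((Polynomial.map φ)^[(j : ℕ)] f) with hΦ
  -- points where f agrees with y
  set S : Finset (Fin n) := Finset.univ.filter
    (fun i : Fin n => f.eval (algebraMap Fq L (α i)) = y i) with hS
  have hScard : n - e ≤ S.card := by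
    have h2 := Finset.card_filter_add_card_filter_not
      (s := (Finset.univ : Finset (Fin n)))
      (p := fun i : Fin n => f.eval (algebraMap Fq L (α i)) = y i)
    simp only [Finset.card_univ, Fintype.card_fin, ← hS] at h2
    simp only [ne_eq] at hagree
    omega
  -- arithmetic: e + D ≤ n - k
  have hDle : (s + 1) * D ≤ n - k + 1 := by
    rw [hD, mul_comm]; exact Nat.div_mul_le_self _ _
  have harith : e + D ≤ n - k := by nlinarith [hDle, he]
  -- the map into L
  have hinj : Function.Injective (fun i : Fin n => algebraMap Fq L (α i)) :=
    fun a b hab => hα ((algebraMap Fq L).injective hab)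
  -- Frobenius fixes the base field image
  have hfix : ∀ x : Fq, φ (algebraMap Fq L x) = algebraMap Fq L x := by
    intro x
    rw [hφ, ← map_pow, ← hq, FiniteField.pow_card]
  have hiter : ∀ (j : ℕ) (x : Fq),
      ((Polynomial.map φ)^[j] f).eval (algebraMap Fq L x)
        = (f.eval (algebraMap Fq L x)) ^ q ^ j := by
    intro j x
    induction j with
    | zero => simp
    | succ j ih =>
      rw [Function.iterate_succ_apply', Polynomial.eval_map,
        ← hfix x, Polynomial.eval₂_hom, hfix, ih]
      rw [hφ, ← pow_mul, ← pow_succ]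
  -- Φ vanishes on the image of S
  have heval : ∀ i ∈ S, Φ.eval (algebraMap Fq L (α i)) = 0 := by
    intro i hi
    simp only [hS, Finset.mem_filter] at hi
    simp only [hΦ, Polynomial.eval_add, Polynomial.eval_finset_sum, Polynomial.eval_mul]
    have := hinterp i
    rw [← this]
    congr 1
    apply Finset.sum_congr rfl
    intro j _
    rw [hiter, hi.2]
  -- degree bound
  have hfdeg : f.degree ≤ ((k - 1 : ℕ) : WithBot ℕ) := by
    rcases eq_or_ne f 0 with rfl | hf0
    · simp
    · rw [Polynomial.degree_eq_natDegree hf0] at hf ⊢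
      exact_mod_cast Nat.le_sub_one_of_lt (by exact_mod_cast hf)
  have hiterdeg : ∀ j : ℕ, ((Polynomial.map φ)^[j] f).degree ≤ ((k - 1 : ℕ) : WithBot ℕ) := by
    intro j
    induction j with
    | zero => simpa using hfdeg
    | succ j ih =>
      rw [Function.iterate_succ_apply']
      exact Polynomial.degree_map_le.trans ih
  have hΦdeg : Φ.degree ≤ ((D + k - 1 : ℕ) : WithBot ℕ) := by
    apply (Polynomial.degree_add_le _ _).trans
    rw [max_le_iff]
    refine ⟨hA0, (Polynomial.degree_sum_le _ _).trans ?_⟩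
    apply Finset.sup_le
    intro j _
    apply (Polynomial.degree_mul_le _ _).trans
    calc (A j.succ).degree + ((Polynomial.map φ)^[(j : ℕ)] f).degree
        ≤ (D : WithBot ℕ) + ((k - 1 : ℕ) : WithBot ℕ) :=
          add_le_add (hAi j) (hiterdeg _)
      _ = ((D + k - 1 : ℕ) : WithBot ℕ) := by
          rw [← Nat.cast_add]
          congr 1
          omega
  -- conclude
  have hcard : Φ.natDegree < (S.image (fun i => algebraMap Fq L (α i))).card := by
    rw [Finset.card_image_of_injective _ hinj]
    have h1 : Φ.natDegree ≤ D + k - 1 := Polynomial.natDegree_le_iff_degree_le.mpr hΦdeg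
    omega
  exact Polynomial.eq_zero_of_natDegree_lt_card_of_eval_eq_zero' Φ _
    (fun t ht => by
      obtain ⟨i, hi, rfl⟩ := Finset.mem_image.mp ht
      exact heval i hi) hcard
end

section
/- Let ℋ = {H_1,…,H_b} be subspaces of F_q^Λ forming an (r, d)-subspace design, i.e., for every r-dimensional subspace W ⊂ F_q^Λ, Σ_{i=1}^b dim(W ∩ H_i) ≤ d. Let T be an (r, Λ, b)-periodic affine subspace of F_q^{Λb}. Then the set 𝒯 = {(f_1,…,f_b) ∈ T : f_j ∈ H_j for all j} is an affine subspace of F_q^{Λb} of dimension at most d. -/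
open Module

set_option synthInstance.maxHeartbeats 1000000
set_option maxHeartbeats 1000000

/-- Extend a submodule to one of any given larger finrank (bounded by ambient dim). -/
lemma aux_extend {F M : Type*} [Field F] [AddCommGroup M] [Module F M]
    [FiniteDimensional F M] (r : ℕ) (hrM : r ≤ finrank F M) :
    ∀ (k : ℕ) (W : Submodule F M), r - finrank F W ≤ k → finrank F W ≤ r →
      ∃ W' : Submodule F M, W ≤ W' ∧ finrank F W' = r := by
  intro k
  induction k with
  | zero => intro W h hle; exact ⟨W, le_rfl, le_antisymm hle (by omega)⟩
  | succ k ih =>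
    intro W h hle
    rcases eq_or_lt_of_le hle with heq | hlt
    · exact ⟨W, le_rfl, heq⟩
    · have hWM : finrank F W < finrank F M := lt_of_lt_of_le hlt hrM
      obtain ⟨m, hm⟩ := Submodule.exists_of_finrank_lt W hWM
      have hm0 : m ∉ W := by simpa using hm 1 one_ne_zero
      have hmne : m ≠ 0 := by rintro rfl; exact hm0 W.zero_mem
      have hinf : W ⊓ (F ∙ m) = ⊥ := by
        rw [eq_bot_iff]
        rintro x hx
        rw [Submodule.mem_inf] at hx
        obtain ⟨hxW, hxm⟩ := hx
        obtain ⟨c, rfl⟩ := Submodule.mem_span_singleton.mp hxm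
        rcases eq_or_ne c 0 with rfl | hc
        · simp
        · exact absurd hxW (hm c hc)
      have h2 : finrank F ↥(W ⊔ (F ∙ m)) = finrank F W + 1 := by
        have h3 := Submodule.finrank_sup_add_finrank_inf_eq W (F ∙ m)
        rw [hinf, finrank_bot, finrank_span_singleton hmne] at h3
        omega
      obtain ⟨W', hle', hr'⟩ := ih (W ⊔ (F ∙ m)) (by omega) (by omega)
      exact ⟨W', le_trans le_sup_left hle', hr'⟩

lemma aux_tele (g c : ℕ → ℕ) : ∀ n, (∀ j, j < n → g j ≤ g (j + 1) + c j) →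
    g 0 ≤ g n + ∑ j ∈ Finset.range n, c j := by
  intro n
  induction n with
  | zero => simp
  | succ n ih =>
    intro h
    calc g 0 ≤ g n + ∑ j ∈ Finset.range n, c j := ih fun j hj => h j (by omega)
      _ ≤ (g (n + 1) + c n) + ∑ j ∈ Finset.range n, c j := by
          gcongr; exact h n (by omega)
      _ = g (n + 1) + ∑ j ∈ Finset.range (n + 1), c j := by
          rw [Finset.sum_range_succ]; ring

/-- An affine subset `T ⊆ (F^Λ)^b` is `(r,Λ,b)`-periodic if there is a subspace
`W ⊆ F^Λ` with `dim W ≤ r` such that for every block index `j` and every prefix `a`,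
the possible `j`-th blocks of elements of `T` extending `a` lie in a coset `W + v_a`. -/
def IsPeriodic (F : Type*) [Field F] {V : Type*} [AddCommGroup V] [Module F V]
    {b : ℕ} (r : ℕ) (H : Set (Fin b → V)) : Prop :=
  ∃ W : Submodule F V, Module.finrank F W ≤ r ∧
    ∀ (j : Fin b) (a : Fin (j : ℕ) → V), ∃ v : V,
      ∀ x ∈ H, (∀ i : Fin (j : ℕ), x ⟨(i : ℕ), i.isLt.trans j.isLt⟩ = a i) →
        x j - v ∈ W

/-- If `H_1,…,H_b` form an `(r,d)`-subspace design in `F_q^Λ` and `T` is an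
`(r,Λ,b)`-periodic affine subspace of `F_q^{Λb}`, then
`𝒯 = {x ∈ T : x_j ∈ H_j ∀j}` is an affine subspace of dimension at most `d`. -/
theorem stmt_8 {F : Type*} [Field F] {Λ b r d : ℕ} (hr : r < Λ)
    (H : Fin b → Submodule F (Fin Λ → F))
    (hdesign : ∀ W : Submodule F (Fin Λ → F), Module.finrank F W = r →
        ∑ i : Fin b, Module.finrank F ↥(W ⊓ H i) ≤ d)
    (T : AffineSubspace F (Fin b → Fin Λ → F))
    (hT : IsPeriodic F r (T : Set (Fin b → Fin Λ → F))) :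
    ∃ A : AffineSubspace F (Fin b → Fin Λ → F),
      (A : Set (Fin b → Fin Λ → F)) = {x | x ∈ T ∧ ∀ j : Fin b, x j ∈ H j} ∧
      Module.finrank F A.direction ≤ d := by
  classical
  obtain ⟨W, hWr, hWper⟩ := hT
  have hΛ : finrank F (Fin Λ → F) = Λ := by simp
  obtain ⟨W', hWW', hW'r⟩ :=
    aux_extend r (by omega) (r - finrank F W) W le_rfl hWr
  set A := T ⊓ (Submodule.pi Set.univ H).toAffineSubspace with hA
  have hAmem : ∀ x, x ∈ A ↔ x ∈ T ∧ ∀ j, x j ∈ H j := by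
    intro x
    rw [hA, AffineSubspace.mem_inf_iff, Submodule.mem_toAffineSubspace,
      Submodule.mem_pi]
    simp
  refine ⟨A, ?_, ?_⟩
  · ext x; simp only [SetLike.mem_coe, Set.mem_setOf_eq, hAmem]
  rcases (A : Set (Fin b → Fin Λ → F)).eq_empty_or_nonempty with hemp | ⟨p, hp⟩
  · rw [(AffineSubspace.coe_eq_bot_iff A).mp hemp, AffineSubspace.direction_bot,
      finrank_bot]
    exact Nat.zero_le d
  have hpA : p ∈ A := hp
  have hpT : p ∈ T := ((hAmem p).mp hpA).1
  have hpH : ∀ j, p j ∈ H j := ((hAmem p).mp hpA).2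
  set D : ℕ → Submodule F (Fin b → Fin Λ → F) := fun n =>
    A.direction ⊓ (⨅ (i : Fin b) (_ : (i : ℕ) < n),
      LinearMap.ker (LinearMap.proj (R := F) (φ := fun _ : Fin b => Fin Λ → F) i))
    with hD
  have hDmem : ∀ n v, v ∈ D n ↔ v ∈ A.direction ∧ ∀ i : Fin b, (i : ℕ) < n → v i = 0 := by
    intro n v
    simp [hD, Submodule.mem_inf, Submodule.mem_iInf, LinearMap.mem_ker]
  have hDmono : ∀ m n : ℕ, m ≤ n → D n ≤ D m := by
    intro m n h v hv
    rw [hDmem] at hv ⊢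
    exact ⟨hv.1, fun i hi => hv.2 i (lt_of_lt_of_le hi h)⟩
  -- key pointwise fact
  have key : ∀ (j : Fin b) (v : Fin b → Fin Λ → F), v ∈ D j → v j ∈ W' ⊓ H j := by
    intro j v hv
    rw [hDmem] at hv
    obtain ⟨hvd, hv0⟩ := hv
    have hvmem : v ∈ (A.direction : Set (Fin b → Fin Λ → F)) := hvd
    rw [AffineSubspace.coe_direction_eq_vsub_set_right hpA] at hvmem
    obtain ⟨x, hxA, hxv⟩ := hvmem
    have hxv' : x - p = v := by rw [← hxv]; rfl
    have hxT : x ∈ T := ((hAmem x).mp hxA).1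
    have hxH : ∀ i, x i ∈ H i := ((hAmem x).mp hxA).2
    obtain ⟨v₀, hv₀⟩ := hWper j (fun i => p ⟨(i : ℕ), i.isLt.trans j.isLt⟩)
    have hx : x j - v₀ ∈ W := by
      refine hv₀ x hxT fun i => ?_
      have h0 := hv0 ⟨(i : ℕ), i.isLt.trans j.isLt⟩ i.isLt
      have h1 : x ⟨(i : ℕ), i.isLt.trans j.isLt⟩ - p ⟨(i : ℕ), i.isLt.trans j.isLt⟩ = 0 := by
        rw [← h0, ← hxv']; rfl
      exact sub_eq_zero.mp h1
    have hp' : p j - v₀ ∈ W := hv₀ p hpT fun i => rfl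
    have hvj : v j = x j - p j := by rw [← hxv']; rfl
    constructor
    · apply hWW'
      have h2 := sub_mem hx hp'
      rw [sub_sub_sub_cancel_right] at h2
      rwa [hvj]
    · rw [hvj]
      exact sub_mem (hxH j) (hpH j)
  -- one step of the filtration
  have step : ∀ j : Fin b,
      finrank F (D (j : ℕ)) ≤ finrank F (D ((j : ℕ) + 1)) + finrank F ↥(W' ⊓ H j) := by
    intro j
    set f := LinearMap.proj (R := F) (φ := fun _ : Fin b => Fin Λ → F) j with hf
    set g := f.domRestrict (D (j : ℕ)) with hg
    have hker : LinearMap.ker g =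
        Submodule.comap (D (j : ℕ)).subtype (D ((j : ℕ) + 1)) := by
      ext ⟨v, hv⟩
      simp only [LinearMap.mem_ker, hg, LinearMap.domRestrict_apply, hf,
        LinearMap.proj_apply, Submodule.mem_comap, Submodule.subtype_apply]
      constructor
      · intro h0
        rw [hDmem]
        refine ⟨((hDmem _ v).mp hv).1, fun i hi => ?_⟩
        rcases Nat.lt_succ_iff_lt_or_eq.mp hi with h | h
        · exact ((hDmem _ v).mp hv).2 i h
        · have : i = j := Fin.ext h
          subst this; exact h0
      · intro h
        exact ((hDmem _ v).mp h).2 j (Nat.lt_succ_self _)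
    have hrn := LinearMap.finrank_range_add_finrank_ker g
    have h1 : finrank F (LinearMap.range g) ≤ finrank F ↥(W' ⊓ H j) := by
      apply Submodule.finrank_mono
      rw [hg, LinearMap.range_domRestrict]
      rintro x hx
      obtain ⟨v, hv, rfl⟩ := hx
      exact key j v hv
    have h2 : finrank F (LinearMap.ker g) = finrank F (D ((j : ℕ) + 1)) := by
      rw [hker]
      exact (Submodule.comapSubtypeEquivOfLe
        (hDmono (j : ℕ) ((j : ℕ) + 1) (Nat.le_succ _))).finrank_eq
    omega
  have hD0 : D 0 = A.direction := by
    ext v; rw [hDmem]; simp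
  have hDb : finrank F (D b) = 0 := by
    have hbot : D b = ⊥ := by
      rw [eq_bot_iff]
      intro v hv
      rw [hDmem] at hv
      have : v = 0 := funext fun i => hv.2 i i.isLt
      simp [this]
    rw [hbot, finrank_bot]
  set c : ℕ → ℕ := fun n => if h : n < b then finrank F ↥(W' ⊓ H ⟨n, h⟩) else 0 with hc
  have htele := aux_tele (fun n => finrank F (D n)) c b (fun j hj => by
    have hstep := step ⟨j, hj⟩
    simpa [hc, dif_pos hj] using hstep)
  calc finrank F A.direction = finrank F (D 0) := by rw [hD0]
    _ ≤ finrank F (D b) + ∑ j ∈ Finset.range b, c j := htele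
    _ = ∑ j : Fin b, finrank F ↥(W' ⊓ H j) := by
        rw [hDb, zero_add, ← Fin.sum_univ_eq_sum_range]
        refine Finset.sum_congr rfl fun i _ => ?_
        simp [hc, i.isLt]
    _ ≤ d := hdesign W' hW'r
end

section
/- Let ζ ∈ (0,1), k a large positive integer, and let ℱ be a family of affine subspaces of F_q^k, each of dimension at most d ≤ ζk/2, with |ℱ| ≤ q^{ck} for some constant c > 0. Let 𝒲 be a random subset of F_q^k obtained by including each x ∈ F_q^k independently with probability q^{−ζk}. Then with probability at least 1 − 2q^{−ck} (for k large enough), 𝒲 satisfies both: (i) |𝒲| ≥ q^{(1−2ζ)k}, and (ii) for every W ∈ ℱ, |𝒲 ∩ W| ≤ ⌈4c/ζ⌉. -/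
/-!
Write `p = q^{-ζk}` and let `𝒲` be the random set. Since `E|𝒲| = q^{(1-ζ)k}`, an exponential
moment bound (`1[|𝒲| < m] ≤ 2^{m - |𝒲|}`) makes `|𝒲| < q^{(1-2ζ)k} = p · E|𝒲|` an event of
probability at most `exp(-E|𝒲|/4) ≤ q^{-ck}` for large `k`. If `𝒲` meets a subspace `W` of
dimension at most `ζk/2` in more than `ℓ = ⌈4c/ζ⌉` points, then some `(ℓ+1)`-subset `T ⊆ W` lies
in `𝒲`; as `Pr[T ⊆ 𝒲] = p^{ℓ+1}` and there are at most `|W|^{ℓ+1}` such `T`, this has probability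
at most `(q^{ζk/2} p)^{ℓ+1} ≤ q^{-2ck}`. A union bound over the at most `q^{ck}` subspaces ends
the proof.
-/

open scoped Classical

open Finset Filter Real

noncomputable def bernoulliWeight {α : Type*} [Fintype α] (p : ℝ) (S : Finset α) : ℝ :=
  p ^ S.card * (1 - p) ^ (Fintype.card α - S.card)

/-- The probability that the random subset of `α` containing each point independently with
probability `p` satisfies `P`. -/
noncomputable def bernoulliProb {α : Type*} [Fintype α] (p : ℝ) (P : Finset α → Prop)
    [DecidablePred P] : ℝ :=
  ∑ S, bernoulliWeight p S * if P S then 1 else 0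

section
variable {α : Type*} [Fintype α] {p : ℝ}

lemma bernoulliWeight_nonneg (hp0 : 0 ≤ p) (hp1 : p ≤ 1) (S : Finset α) :
    0 ≤ bernoulliWeight p S := by
  have := sub_nonneg.2 hp1
  unfold bernoulliWeight
  positivity

lemma sum_bernoulliWeight (p : ℝ) : ∑ S : Finset α, bernoulliWeight p S = 1 := by
  simp only [bernoulliWeight, Fintype.sum_pow_mul_eq_add_pow, add_sub_cancel, one_pow]

lemma bernoulliProb_le_sum_mul (hp0 : 0 ≤ p) (hp1 : p ≤ 1) (P : Finset α → Prop)
    [DecidablePred P] {f : Finset α → ℝ} (hf0 : ∀ S, 0 ≤ f S) (hf : ∀ S, P S → 1 ≤ f S) :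
    bernoulliProb p P ≤ ∑ S, bernoulliWeight p S * f S := by
  refine sum_le_sum fun S _ => mul_le_mul_of_nonneg_left ?_ (bernoulliWeight_nonneg hp0 hp1 S)
  split_ifs with h
  exacts [hf S h, hf0 S]

lemma bernoulliProb_mono (hp0 : 0 ≤ p) (hp1 : p ≤ 1) {P Q : Finset α → Prop}
    [DecidablePred P] [DecidablePred Q] (h : ∀ S, P S → Q S) :
    bernoulliProb p P ≤ bernoulliProb p Q :=
  bernoulliProb_le_sum_mul hp0 hp1 P (fun S => by split_ifs <;> norm_num)
    fun S hS => by simp [h S hS]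

lemma one_sub_le_bernoulliProb_and_forall (hp0 : 0 ≤ p) (hp1 : p ≤ 1) {ι : Type*}
    (s : Finset ι) (P : Finset α → Prop) (Q : ι → Finset α → Prop) [DecidablePred P]
    [∀ i, DecidablePred (Q i)] :
    1 - (bernoulliProb p (fun S => ¬ P S) + ∑ i ∈ s, bernoulliProb p (fun S => ¬ Q i S)) ≤
      bernoulliProb p (fun S => P S ∧ ∀ i ∈ s, Q i S) := by
  rw [sub_le_iff_le_add, ← sum_bernoulliWeight (α := α) p]
  simp only [bernoulliProb]
  rw [sum_comm, ← sum_add_distrib, ← sum_add_distrib]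
  refine sum_le_sum fun S _ => ?_
  rw [← mul_sum, ← mul_add, ← mul_add]
  refine le_mul_of_one_le_right (bernoulliWeight_nonneg hp0 hp1 S) ?_
  have hsum : 0 ≤ ∑ i ∈ s, (if ¬ Q i S then (1 : ℝ) else 0) :=
    sum_nonneg fun i _ => by split_ifs <;> norm_num
  have hP0 : (0 : ℝ) ≤ if ¬ P S then 1 else 0 := by split_ifs <;> norm_num
  by_cases hgood : P S ∧ ∀ i ∈ s, Q i S
  · rw [if_pos hgood]
    linarith
  rw [if_neg hgood]
  rcases not_and_or.1 hgood with hP | hQ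
  · rw [if_pos hP]
    linarith
  · obtain ⟨i, hi, hQi⟩ : ∃ i ∈ s, ¬ Q i S := by simpa using hQ
    have := single_le_sum (f := fun i => if ¬ Q i S then (1 : ℝ) else 0)
      (fun i _ => by split_ifs <;> norm_num) hi
    simp only [hQi, not_false_eq_true, if_true] at this
    linarith

lemma bernoulliProb_superset (T : Finset α) : bernoulliProb p (T ⊆ ·) = p ^ T.card := by
  set g : α → ℝ := fun i => if i ∈ T then 0 else 1 - p
  have hterm : ∀ S : Finset α,
      bernoulliWeight p S * (if T ⊆ S then 1 else 0) = (∏ _i ∈ S, p) * ∏ i ∈ univ \ S, g i := by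
    intro S
    rw [prod_const, bernoulliWeight, mul_assoc]
    congr 1
    split_ifs with hT
    · rw [mul_one, prod_congr rfl fun i hi => if_neg fun hiT => (mem_sdiff.1 hi).2 (hT hiT),
        prod_const, ← compl_eq_univ_sdiff, card_compl]
    · obtain ⟨i, hiT, hiS⟩ := not_subset.1 hT
      rw [mul_zero, prod_eq_zero (f := g) (mem_sdiff.2 ⟨mem_univ i, hiS⟩) (if_pos hiT)]
  calc bernoulliProb p (T ⊆ ·) = ∏ i, (p + g i) := by
        rw [prod_add, bernoulliProb, powerset_univ]
        exact sum_congr rfl fun S _ => hterm S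
    _ = ∏ i, if i ∈ T then p else 1 := by
        refine prod_congr rfl fun i _ => ?_
        simp only [g]
        split_ifs <;> ring
    _ = p ^ T.card := by rw [prod_ite_mem, univ_inter, prod_const]

lemma bernoulliProb_le_card_inter (hp0 : 0 ≤ p) (hp1 : p ≤ 1) (A : Finset α) (t : ℕ) :
    bernoulliProb p (fun S => t ≤ (S ∩ A).card) ≤ (A.card * p) ^ t := by
  have hind : ∀ S : Finset α, t ≤ (S ∩ A).card →
      1 ≤ ∑ T ∈ A.powersetCard t, if T ⊆ S then (1 : ℝ) else 0 := by
    intro S hS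
    obtain ⟨T, hTS, hTcard⟩ := exists_subset_card_eq hS
    have hT : T ∈ A.powersetCard t :=
      mem_powersetCard.2 ⟨hTS.trans inter_subset_right, hTcard⟩
    have := single_le_sum (f := fun T => if T ⊆ S then (1 : ℝ) else 0)
      (fun T _ => by split_ifs <;> norm_num) hT
    simpa only [hTS.trans inter_subset_left, if_true] using this
  calc bernoulliProb p (fun S => t ≤ (S ∩ A).card)
      ≤ ∑ S, bernoulliWeight p S * ∑ T ∈ A.powersetCard t, if T ⊆ S then (1 : ℝ) else 0 :=
        bernoulliProb_le_sum_mul hp0 hp1 _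
          (fun S => sum_nonneg fun T _ => by split_ifs <;> norm_num) hind
    _ = ∑ T ∈ A.powersetCard t, bernoulliProb p (T ⊆ ·) := by
        simp only [mul_sum, bernoulliProb]
        exact sum_comm
    _ = (A.card.choose t) * p ^ t := by
        rw [sum_congr rfl fun T hT => by
          rw [bernoulliProb_superset, (mem_powersetCard.1 hT).2],
          sum_const, card_powersetCard, nsmul_eq_mul]
    _ ≤ (A.card * p) ^ t := by
        rw [mul_pow]
        gcongr
        exact_mod_cast Nat.choose_le_pow A.card t

lemma bernoulliProb_card_lt_le (hp0 : 0 ≤ p) (hp1 : p ≤ 1) {m : ℝ} (hm : 0 ≤ m) :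
    bernoulliProb p (fun S : Finset α => ¬ m ≤ S.card) ≤
      exp (m - Fintype.card α * p / 2) := by
  have hind : ∀ S : Finset α, ¬ m ≤ S.card → 1 ≤ 2 ^ m * (1 / 2 : ℝ) ^ S.card := by
    intro S hS
    rw [one_div_pow, ← div_eq_mul_one_div, one_le_div (by positivity), ← rpow_natCast]
    exact rpow_le_rpow_of_exponent_le one_le_two (not_le.1 hS).le
  calc bernoulliProb p (fun S : Finset α => ¬ m ≤ S.card)
      ≤ ∑ S, bernoulliWeight p S * (2 ^ m * (1 / 2 : ℝ) ^ S.card) :=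
        bernoulliProb_le_sum_mul hp0 hp1 _ (fun S => by positivity) hind
    _ = 2 ^ m * (p / 2 + (1 - p)) ^ Fintype.card α := by
        rw [← Fintype.sum_pow_mul_eq_add_pow, mul_sum]
        refine sum_congr rfl fun S _ => ?_
        rw [bernoulliWeight, div_eq_mul_one_div p, mul_pow]
        ring
    _ ≤ exp m * exp (-(p / 2)) ^ Fintype.card α := by
        have h2 : (2 : ℝ) ^ m ≤ exp m := by
          rw [rpow_def_of_pos two_pos]
          exact exp_le_exp.2 (mul_le_of_le_one_left hm (log_two_lt_d9.le.trans (by norm_num)))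
        have hexp : p / 2 + (1 - p) ≤ exp (-(p / 2)) := by linarith [add_one_le_exp (-(p / 2))]
        exact mul_le_mul h2 (pow_le_pow_left₀ (by linarith) hexp _) (by positivity) (exp_pos m).le
    _ = exp (m - Fintype.card α * p / 2) := by
        rw [← exp_nat_mul, ← exp_add]
        ring_nf

end

lemma AffineSubspace.ncard_le_card_pow_finrank {F V : Type*} [Field F] [Fintype F]
    [AddCommGroup V] [Module F V] [Finite V] (W : AffineSubspace F V) :
    (W : Set V).ncard ≤ Fintype.card F ^ Module.finrank F W.direction := by
  rcases (W : Set V).eq_empty_or_nonempty with hW | ⟨x, hx⟩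
  · simp [hW]
  have : Nonempty W := ⟨⟨x, hx⟩⟩
  have := Fintype.ofFinite V
  rw [← Nat.card_coe_set_eq]
  change Nat.card W ≤ _
  rw [← Nat.card_congr (Equiv.vaddConst (⟨x, hx⟩ : W)),
    Nat.card_eq_fintype_card, Module.card_eq_pow_finrank (K := F)]

lemma eventually_mul_le_rpow_mul {r a : ℝ} (hr : 1 < r) (ha : 0 < a) (C : ℝ) :
    ∀ᶠ k : ℕ in atTop, C * k ≤ r ^ (a * k) := by
  have hra : 1 < r ^ a := one_lt_rpow hr ha
  filter_upwards [((isLittleO_coe_const_pow_of_one_lt (R := ℝ) hra).const_mul_left C).bound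
    one_pos] with k hk
  rw [rpow_mul (by linarith), rpow_natCast]
  simpa [abs_of_pos (hra.trans' one_pos)] using (le_abs_self _).trans hk

lemma bernoulliProb_card_lt_rpow_le {α : Type*} [Fintype α] {q ζ c x : ℝ} (hq : 1 < q)
    (hα : (Fintype.card α : ℝ) = q ^ x) (h4 : 4 ≤ q ^ (ζ * x))
    (hlin : 4 * c * log q * x ≤ q ^ ((1 - ζ) * x)) :
    bernoulliProb (q ^ (-(ζ * x))) (fun S : Finset α => ¬ q ^ ((1 - 2 * ζ) * x) ≤ S.card) ≤
      q ^ (-(c * x)) := by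
  have hq0 : 0 < q := one_pos.trans hq
  set p := q ^ (-(ζ * x)) with hp
  have hp0 : 0 ≤ p := (rpow_pos_of_pos hq0 _).le
  have hp4 : p ≤ 1 / 4 := by
    rw [hp, rpow_neg hq0.le, one_div]
    exact inv_anti₀ (by norm_num) h4
  have hN : 0 ≤ q ^ ((1 - ζ) * x) := (rpow_pos_of_pos hq0 _).le
  have hnp : (Fintype.card α : ℝ) * p = q ^ ((1 - ζ) * x) := by
    rw [hα, hp, ← rpow_add hq0]
    ring_nf
  have hm : q ^ ((1 - 2 * ζ) * x) = q ^ ((1 - ζ) * x) * p := by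
    rw [hp, ← rpow_add hq0]
    ring_nf
  calc _ ≤ exp (q ^ ((1 - 2 * ζ) * x) - Fintype.card α * p / 2) :=
        bernoulliProb_card_lt_le hp0 (by linarith) (rpow_pos_of_pos hq0 _).le
    _ ≤ exp (log q * (-(c * x))) := by
        rw [exp_le_exp, hm, mul_div_assoc, ← mul_div_assoc, hnp]
        nlinarith [mul_le_mul_of_nonneg_left hp4 hN]
    _ = q ^ (-(c * x)) := (rpow_def_of_pos hq0 _).symm

lemma bernoulliProb_ceil_lt_ncard_inter_le {F V : Type*} [Field F] [Fintype F]
    [AddCommGroup V] [Module F V] [Fintype V] (W : AffineSubspace F V) {ζ c x : ℝ}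
    (hζ : 0 < ζ) (hx : 0 ≤ x) (hW : (Module.finrank F W.direction : ℝ) ≤ ζ * x / 2) :
    bernoulliProb ((Fintype.card F : ℝ) ^ (-(ζ * x)))
        (fun S : Finset V => ¬ (((S : Set V) ∩ W).ncard : ℝ) ≤ ⌈4 * c / ζ⌉₊) ≤
      (Fintype.card F : ℝ) ^ (-(2 * c * x)) := by
  have hq : (1 : ℝ) < Fintype.card F := by exact_mod_cast Fintype.one_lt_card
  have hWcard : ((W : Set V).ncard : ℝ) ≤ (Fintype.card F : ℝ) ^ Module.finrank F W.direction := by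
    exact_mod_cast W.ncard_le_card_pow_finrank
  set q : ℝ := (Fintype.card F : ℝ)
  set ℓ := ⌈4 * c / ζ⌉₊
  have hq0 : 0 < q := one_pos.trans hq
  set p := q ^ (-(ζ * x)) with hp
  have hp0 : 0 ≤ p := (rpow_pos_of_pos hq0 _).le
  have hp1 : p ≤ 1 := rpow_le_one_of_one_le_of_nonpos hq.le (by nlinarith)
  set A : Finset V := univ.filter (· ∈ W)
  have hinter : ∀ S : Finset V, ((S : Set V) ∩ W).ncard = (S ∩ A).card := fun S => by
    rw [← Set.ncard_coe_finset]
    congr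
    ext
    simp [A]
  have hA : (A.card : ℝ) ≤ q ^ (ζ * x / 2) := by
    have hAW : A.card = (W : Set V).ncard := by simpa using (hinter univ).symm
    calc (A.card : ℝ) ≤ q ^ Module.finrank F W.direction := by
          rwa [hAW]
      _ = q ^ (Module.finrank F W.direction : ℝ) := (rpow_natCast _ _).symm
      _ ≤ q ^ (ζ * x / 2) := rpow_le_rpow_of_exponent_le hq.le hW
  have hℓ : 4 * c ≤ ζ * ℓ := (div_le_iff₀' hζ).1 (Nat.le_ceil _)
  calc _ ≤ bernoulliProb p (fun S => ℓ + 1 ≤ (S ∩ A).card) :=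
        bernoulliProb_mono hp0 hp1 fun S hS => by
          rw [hinter] at hS
          exact_mod_cast not_le.1 hS
    _ ≤ (A.card * p) ^ (ℓ + 1) := bernoulliProb_le_card_inter hp0 hp1 A _
    _ ≤ (q ^ (ζ * x / 2) * p) ^ (ℓ + 1) := by gcongr
    _ = q ^ (-(ζ * x / 2) * (ℓ + 1 : ℕ)) := by
        rw [hp, ← rpow_add hq0, rpow_mul hq0.le, rpow_natCast]
        ring_nf
    _ ≤ q ^ (-(2 * c * x)) := by
        refine rpow_le_rpow_of_exponent_le hq.le ?_
        push_cast
        nlinarith [mul_le_mul_of_nonneg_right hℓ hx]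

theorem stmt_12_general {F : Type*} [Field F] [Fintype F] {q : ℕ}
    (hq : Fintype.card F = q) (ζ c : ℝ) (hζ : ζ ∈ Set.Ioo (0 : ℝ) 1) :
    ∃ k₀ : ℕ, ∀ k : ℕ, k₀ ≤ k →
      ∀ 𝓕 : Finset (AffineSubspace F (Fin k → F)),
        (∀ W ∈ 𝓕, (Module.finrank F W.direction : ℝ) ≤ ζ * k / 2) →
        (𝓕.card : ℝ) ≤ (q : ℝ) ^ (c * k) →
        1 - 2 * (q : ℝ) ^ (-(c * k)) ≤
          ∑ S : Finset (Fin k → F),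
            ((q : ℝ) ^ (-(ζ * k))) ^ S.card *
              (1 - (q : ℝ) ^ (-(ζ * k))) ^ (Fintype.card (Fin k → F) - S.card) *
              (if ((q : ℝ) ^ ((1 - 2 * ζ) * k) ≤ (S.card : ℝ) ∧
                    ∀ W ∈ 𝓕,
                      (((S : Set (Fin k → F)) ∩ (W : Set (Fin k → F))).ncard : ℝ)
                        ≤ (⌈4 * c / ζ⌉₊ : ℝ))
                then 1 else 0) := by
  obtain ⟨hζ0, hζ1⟩ := hζ
  subst hq
  have hq1 : (1 : ℝ) < Fintype.card F := by exact_mod_cast Fintype.one_lt_card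
  have hq0 : (0 : ℝ) < Fintype.card F := one_pos.trans hq1
  obtain ⟨k₀, hk₀⟩ := ((eventually_ge_atTop 1).and ((eventually_mul_le_rpow_mul hq1 hζ0 4).and
    (eventually_mul_le_rpow_mul hq1 (sub_pos.2 hζ1) (4 * c * log (Fintype.card F))))
    ).exists_forall_of_atTop
  refine ⟨k₀, fun k hk 𝓕 hdim h𝓕 => ?_⟩
  obtain ⟨hk1, h4k, hlin⟩ := hk₀ k hk
  have h4 : 4 ≤ (Fintype.card F : ℝ) ^ (ζ * k) :=
    le_trans (le_mul_of_one_le_right (by norm_num) (by exact_mod_cast hk1)) h4k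
  have hsize := bernoulliProb_card_lt_rpow_le (α := Fin k → F) hq1 (by simp [rpow_natCast]) h4 hlin
  have hsubspace := sum_le_sum fun W hW =>
    bernoulliProb_ceil_lt_ncard_inter_le W hζ0 k.cast_nonneg (hdim W hW) (c := c)
  have hfamily : (𝓕.card : ℝ) * (Fintype.card F : ℝ) ^ (-(2 * c * k)) ≤
      (Fintype.card F : ℝ) ^ (-(c * k)) := by
    calc _ ≤ (Fintype.card F : ℝ) ^ (c * k) * (Fintype.card F : ℝ) ^ (-(2 * c * k)) := by
          gcongr
      _ = (Fintype.card F : ℝ) ^ (-(c * k)) := by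
          rw [← rpow_add hq0]
          ring_nf
  have hunion := one_sub_le_bernoulliProb_and_forall (p := (Fintype.card F : ℝ) ^ (-(ζ * k)))
    (rpow_pos_of_pos hq0 _).le
    (rpow_le_one_of_one_le_of_nonpos hq1.le (neg_nonpos.2 (by positivity))) 𝓕
    (fun S => (Fintype.card F : ℝ) ^ ((1 - 2 * ζ) * k) ≤ S.card)
    (fun W (S : Finset (Fin k → F)) => (((S : Set (Fin k → F)) ∩ W).ncard : ℝ) ≤ ⌈4 * c / ζ⌉₊)
  refine le_trans ?_ (hunion.trans_eq ?_)
  · rw [sum_const, nsmul_eq_mul] at hsubspace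
    linarith
  · -- the decidability instance of the `∀ W ∈ 𝓕` clause differs from the one synthesized here
    unfold bernoulliProb bernoulliWeight
    congr!

/-- Random sets are evasive for a small family `ℱ` of low-dimensional affine subspaces:
including each point of `F_q^k` independently with probability `q^{-ζk}`, with
probability at least `1 - 2q^{-ck}` (for `k` large enough) the resulting set `𝒲` has
`|𝒲| ≥ q^{(1-2ζ)k}` and `|𝒲 ∩ W| ≤ ⌈4c/ζ⌉` for every `W ∈ ℱ`.
(The probability of the good event is written as an explicit Bernoulli-weighted sum
over all subsets.) -/
theorem stmt_12 {F : Type*} [Field F] [Fintype F] {q : ℕ}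
    (hq : Fintype.card F = q) (ζ c : ℝ) (hζ : ζ ∈ Set.Ioo (0 : ℝ) 1) (hc : 0 < c) :
    ∃ k₀ : ℕ, ∀ k : ℕ, k₀ ≤ k →
      ∀ 𝓕 : Finset (AffineSubspace F (Fin k → F)),
        (∀ W ∈ 𝓕, (Module.finrank F W.direction : ℝ) ≤ ζ * k / 2) →
        (𝓕.card : ℝ) ≤ (q : ℝ) ^ (c * k) →
        1 - 2 * (q : ℝ) ^ (-(c * k)) ≤
          ∑ S : Finset (Fin k → F),
            ((q : ℝ) ^ (-(ζ * k))) ^ S.card *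
              (1 - (q : ℝ) ^ (-(ζ * k))) ^ (Fintype.card (Fin k → F) - S.card) *
              (if ((q : ℝ) ^ ((1 - 2 * ζ) * k) ≤ (S.card : ℝ) ∧
                    ∀ W ∈ 𝓕,
                      (((S : Set (Fin k → F)) ∩ (W : Set (Fin k → F))).ncard : ℝ)
                        ≤ (⌈4 * c / ζ⌉₊ : ℝ))
                then 1 else 0) :=
  stmt_12_general hq ζ c hζ
end
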